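/- Let (X,d) be a compact connected metric space and f : X → X an expansive homeomorphism. Then the following are equivalent: (1) f is topologically transitive and has the shadowing property; (2) f is topologically mixing and has the shadowing property; (3) f has the two-sided limit shadowing property with a gap; (4) f has the two-sided limit shadowing property. -/

import Mathlib

/-!
Shadowing turns `δ`-chains into orbits, so under shadowing transitivity and mixing reduce to
chain transitivity and chain mixing, and on a connected space every chain transitive map is chain
mixing. Mixing provides `δ`-chains of every large length between any two points; splicing one into
a limit pseudo-orbit yields a `δ`-pseudo-orbit, and by uniform expansivity its shadowing orbit
converges to it at both ends. Conversely, two-sided limit shadowing with a gap links the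
`ω`-limit set of any point to the `α`-limit set of any other, which gives chain transitivity; and
if finite shadowing failed, ever finer non-shadowable chains glued together would form a limit
pseudo-orbit whose future is not shadowed. By compactness finite shadowing is shadowing.
-/

open Filter Topology

variable {X : Type*} [MetricSpace X]

/-- `f` is expansive, with some expansivity constant `ε > 0`. -/
def Expansive (f : X ≃ X) : Prop :=
  ∃ ε : ℝ, 0 < ε ∧ ∀ x y : X, (∀ n : ℤ, dist ((f ^ n) x) ((f ^ n) y) ≤ ε) → x = y

/-- `g` is topologically transitive. -/
def TopologicallyTransitive (g : X → X) : Prop :=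
  ∀ U V : Set X, IsOpen U → IsOpen V → U.Nonempty → V.Nonempty →
    ∃ N : ℕ, 0 < N ∧ (g^[N] '' U ∩ V).Nonempty

/-- `g` is topologically mixing. -/
def TopologicallyMixing (g : X → X) : Prop :=
  ∀ U V : Set X, IsOpen U → IsOpen V → U.Nonempty → V.Nonempty →
    ∃ N : ℕ, ∀ n : ℕ, N ≤ n → (g^[n] '' U ∩ V).Nonempty

/-- The (two-sided) shadowing property for a bijection `f`. -/
def ShadowingPropertyZ (f : X ≃ X) : Prop :=
  ∀ ε : ℝ, 0 < ε → ∃ δ : ℝ, 0 < δ ∧ ∀ x : ℤ → X,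
    (∀ i : ℤ, dist (f (x i)) (x (i + 1)) < δ) →
    ∃ y : X, ∀ i : ℤ, dist ((f ^ i) y) (x i) < ε

/-- A two-sided limit pseudo-orbit: `d(f(x i), x (i+1)) → 0` as `|i| → ∞`. -/
def IsTwoSidedLimitPseudoOrbit (f : X ≃ X) (x : ℤ → X) : Prop :=
  Tendsto (fun i : ℤ => dist (f (x i)) (x (i + 1))) cofinite (𝓝 0)

/-- The sequence `x` is two-sided limit shadowed with gap `K`. -/
def TwoSidedLimitShadowedWithGap (f : X ≃ X) (x : ℤ → X) (K : ℤ) : Prop :=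
  ∃ y : X,
    Tendsto (fun i : ℤ => dist ((f ^ i) y) (x i)) atBot (𝓝 0) ∧
    Tendsto (fun i : ℤ => dist ((f ^ (K + i)) y) (x i)) atTop (𝓝 0)

/-- `f` has the two-sided limit shadowing property with a gap. -/
def TwoSidedLimitShadowingWithGap (f : X ≃ X) : Prop :=
  ∃ N : ℕ, ∀ x : ℤ → X, IsTwoSidedLimitPseudoOrbit f x →
    ∃ K : ℤ, |K| ≤ (N : ℤ) ∧ TwoSidedLimitShadowedWithGap f x K

/-- `f` has the two-sided limit shadowing property (gap `0`). -/
def TwoSidedLimitShadowing (f : X ≃ X) : Prop :=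
  ∀ x : ℤ → X, IsTwoSidedLimitPseudoOrbit f x → TwoSidedLimitShadowedWithGap f x 0

namespace Equiv.Perm

variable {α : Type*} (f : Perm α)

lemma zpow_add_apply (i j : ℤ) (x : α) : (f ^ (i + j)) x = (f ^ i) ((f ^ j) x) := by
  rw [zpow_add, mul_apply]

lemma zpow_add_one_apply (i : ℤ) (x : α) : (f ^ (i + 1)) x = f ((f ^ i) x) := by
  rw [add_comm, zpow_add_apply, zpow_one]

lemma zpow_natCast_apply (n : ℕ) (x : α) : (f ^ (n : ℤ)) x = f^[n] x := by
  rw [zpow_natCast, coe_pow]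

end Equiv.Perm

lemma Homeomorph.toEquiv_zpow {Y : Type*} [TopologicalSpace Y] (f : Y ≃ₜ Y) (i : ℤ) :
    (f ^ i).toEquiv = f.toEquiv ^ i :=
  map_zpow (⟨⟨Homeomorph.toEquiv, rfl⟩, fun _ _ => rfl⟩ : (Y ≃ₜ Y) →* Equiv.Perm Y) f i

lemma Homeomorph.continuous_toEquiv_zpow {Y : Type*} [TopologicalSpace Y] (f : Y ≃ₜ Y) (i : ℤ) :
    Continuous ⇑(f.toEquiv ^ i) := by
  rw [← f.toEquiv_zpow]
  exact (f ^ i).continuous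

section Chains

variable {α : Type*} {f : X → X} {δ : ℝ} {n m : ℕ} {p q r : X}

def IsDeltaChain (f : X → X) (δ : ℝ) (n : ℕ) (s : ℕ → X) : Prop :=
  ∀ t < n, dist (f (s t)) (s (t + 1)) < δ

def ChainJoins (f : X → X) (δ : ℝ) (n : ℕ) (p q : X) : Prop :=
  ∃ s : ℕ → X, IsDeltaChain f δ n s ∧ s 0 = p ∧ s n = q

def chainAppend (n : ℕ) (s s' : ℕ → α) (t : ℕ) : α :=
  if t ≤ n then s t else s' (t - n)

lemma chainAppend_of_le {s s' : ℕ → α} {t : ℕ} (ht : t ≤ n) :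
    chainAppend n s s' t = s t :=
  if_pos ht

lemma chainAppend_add {s s' : ℕ → α} (h : s n = s' 0) (t : ℕ) :
    chainAppend n s s' (n + t) = s' t := by
  rcases t.eq_zero_or_pos with rfl | ht
  · simpa [chainAppend] using h
  · simp [chainAppend, ht.ne']

lemma IsDeltaChain.append {s s' : ℕ → X} (hs : IsDeltaChain f δ n s)
    (hs' : IsDeltaChain f δ m s') (h : s n = s' 0) :
    IsDeltaChain f δ (n + m) (chainAppend n s s') := by
  intro t ht
  rcases lt_or_ge t n with htn | htn
  · rw [chainAppend_of_le htn.le, chainAppend_of_le htn]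
    exact hs t htn
  · obtain ⟨t, rfl⟩ := Nat.exists_eq_add_of_le htn
    rw [chainAppend_add h, add_assoc, chainAppend_add h]
    exact hs' t (by omega)

lemma ChainJoins.trans (h₁ : ChainJoins f δ n p q) (h₂ : ChainJoins f δ m q r) :
    ChainJoins f δ (n + m) p r := by
  obtain ⟨s, hs, rfl, rfl⟩ := h₁
  obtain ⟨s', hs', hs'0, rfl⟩ := h₂
  exact ⟨chainAppend n s s', hs.append hs' hs'0.symm, chainAppend_of_le (Nat.zero_le n),
    chainAppend_add hs'0.symm m⟩

lemma chainJoins_of_near_orbit {u : X} (hn : 0 < n) (hp : dist (f p) (f u) < δ / 2)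
    (hq : dist (f^[n] u) q < δ / 2) : ChainJoins f δ n p q := by
  refine ⟨fun t => if t = 0 then p else if t = n then q else f^[t] u, fun t ht => ?_,
    by simp, by simp [hn.ne']⟩
  have hδ : 0 < δ := by linarith [dist_nonneg (x := f p) (y := f u)]
  rcases t.eq_zero_or_pos with rfl | ht0
  · by_cases h1 : 1 = n
    · subst h1
      simp only [zero_add, if_true, one_ne_zero, if_false]
      calc dist (f p) q ≤ dist (f p) (f u) + dist (f u) q := dist_triangle _ _ _
        _ < δ / 2 + δ / 2 := add_lt_add hp (by simpa using hq)
        _ = δ := add_halves δ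
    · simp only [zero_add, if_true, one_ne_zero, if_false, h1, Function.iterate_one]
      linarith
  · simp only [ht0.ne', ht.ne, if_false, Nat.add_one_ne_zero, ← Function.iterate_succ_apply' f t u]
    split_ifs with h
    · subst h; linarith
    · simpa using hδ

lemma isOpen_setOf_chainJoins (hn : 0 < n) : IsOpen {q | ChainJoins f δ n p q} := by
  refine Metric.isOpen_iff.2 fun q ⟨s, hs, hs0, hsn⟩ => ?_
  obtain ⟨n, rfl⟩ : ∃ k, n = k + 1 := ⟨n - 1, by omega⟩
  have hlast : dist (f (s n)) q < δ := hsn ▸ hs n n.lt_succ_self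
  refine ⟨δ - dist (f (s n)) q, sub_pos.2 hlast, fun q' hq' => ?_⟩
  refine ⟨Function.update s (n + 1) q', fun t ht => ?_, by simp [hs0], by simp⟩
  rcases (Nat.lt_succ_iff.1 ht).lt_or_eq with ht | rfl
  · rw [Function.update_of_ne (by omega), Function.update_of_ne (by omega)]
    exact hs t (by omega)
  · rw [Function.update_of_ne (by omega), Function.update_self]
    rw [Metric.mem_ball, dist_comm] at hq'
    linarith [dist_triangle (f (s t)) q q']

lemma isDeltaChain_iterate (hδ : 0 < δ) (n : ℕ) (x : X) :
    IsDeltaChain f δ n (fun t => f^[t] x) := fun t _ => by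
  rw [← Function.iterate_succ_apply' f t x, dist_self]
  exact hδ

end Chains

section ChainRecurrence

variable {f : X → X}

def ChainTransitive (f : X → X) : Prop :=
  ∀ δ : ℝ, 0 < δ → ∀ p q : X, ∃ n, 0 < n ∧ ChainJoins f δ n p q

def ChainMixing (f : X → X) : Prop :=
  ∀ δ : ℝ, 0 < δ → ∀ p q : X, ∃ N : ℕ, ∀ n, N ≤ n → ChainJoins f δ n p q

lemma TopologicallyTransitive.chainTransitive (hf : Continuous f)
    (h : TopologicallyTransitive f) : ChainTransitive f := by
  intro δ hδ p q
  obtain ⟨κ, hκ, hfκ⟩ := Metric.continuous_iff.1 hf p (δ / 2) (half_pos hδ)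
  obtain ⟨N, hN, _, ⟨u, hu, rfl⟩, hq⟩ := h _ _ Metric.isOpen_ball Metric.isOpen_ball
    ⟨p, Metric.mem_ball_self hκ⟩ ⟨q, Metric.mem_ball_self (half_pos hδ)⟩
  exact ⟨N, hN, chainJoins_of_near_orbit hN (dist_comm (f u) (f p) ▸ hfκ u hu) hq⟩

def loopLengths (f : X → X) (δ : ℝ) (p : X) : AddSubmonoid ℕ where
  carrier := {n | ChainJoins f δ n p p}
  zero_mem' := ⟨fun _ => p, fun t ht => absurd ht t.not_lt_zero, rfl, rfl⟩
  add_mem' := ChainJoins.trans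

/-- On a connected space the loop lengths cannot all lie in a proper subgroup `kℤ`: the points
reached from `p` by chains of length divisible by `k` would form a proper clopen set. -/
lemma ChainTransitive.setGcd_loopLengths [ConnectedSpace X] (h : ChainTransitive f) {δ : ℝ}
    (hδ : 0 < δ) (p : X) : Nat.setGcd (loopLengths f δ p) = 1 := by
  set k := Nat.setGcd (loopLengths f δ p)
  have hcongr : ∀ {y : X} {n₁ n₂ : ℕ}, ChainJoins f δ n₁ p y → ChainJoins f δ n₂ p y →
      k ∣ n₁ → k ∣ n₂ := by
    intro y n₁ n₂ h₁ h₂ hk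
    obtain ⟨m, -, hm⟩ := h δ hδ y p
    have hkm := (Nat.dvd_add_right hk).1 (Nat.setGcd_dvd_of_mem (h₁.trans hm))
    exact (Nat.dvd_add_left hkm).1 (Nat.setGcd_dvd_of_mem (h₂.trans hm))
  set A := {y | ∃ n, 0 < n ∧ ChainJoins f δ n p y ∧ k ∣ n}
  have hA : IsClopen A := by
    refine ⟨⟨isOpen_iff_forall_mem_open.2 fun y hy => ?_⟩, isOpen_iff_forall_mem_open.2 ?_⟩
    · obtain ⟨n, hn, hny⟩ := h δ hδ p y
      have hkn : ¬ k ∣ n := fun hkn => hy ⟨n, hn, hny, hkn⟩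
      exact ⟨_, fun y' hy' ⟨n', _, hn'y', hkn'⟩ => hkn (hcongr hn'y' hy' hkn'),
        isOpen_setOf_chainJoins hn, hny⟩
    · rintro y ⟨n, hn, hny, hkn⟩
      exact ⟨_, fun y' hy' => ⟨n, hn, hy', hkn⟩, isOpen_setOf_chainJoins hn, hny⟩
  obtain ⟨s, hs, hsp⟩ := h δ hδ p p
  have hks : k ∣ s := Nat.setGcd_dvd_of_mem hsp
  have hstep : ChainJoins f δ 1 p (f p) :=
    chainJoins_of_near_orbit (u := p) one_pos (by simpa using hδ) (by simpa using hδ)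
  obtain ⟨n, -, hn, hkn⟩ : f p ∈ A := hA.eq_univ ⟨p, s, hs, hsp, hks⟩ ▸ Set.mem_univ _
  exact Nat.dvd_one.1 ((Nat.dvd_add_right hks).1 (hcongr hn (hsp.trans hstep) hkn))

lemma ChainTransitive.chainMixing [ConnectedSpace X] (h : ChainTransitive f) :
    ChainMixing f := by
  intro δ hδ p q
  obtain ⟨N, hN⟩ := Nat.exists_mem_closure_of_ge (loopLengths f δ p : Set ℕ)
  obtain ⟨l, -, hl⟩ := h δ hδ p q
  refine ⟨N + l, fun n hn => ?_⟩
  have hloop : n - l ∈ loopLengths f δ p := by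
    rw [← AddSubmonoid.closure_eq (loopLengths f δ p)]
    exact hN _ (by omega) (h.setGcd_loopLengths hδ p ▸ one_dvd _)
  simpa [Nat.sub_add_cancel (show l ≤ n by omega)] using ChainJoins.trans hloop hl

lemma TopologicallyMixing.topologicallyTransitive (h : TopologicallyMixing f) :
    TopologicallyTransitive f := fun U V hU hV hU' hV' =>
  let ⟨N, hN⟩ := h U V hU hV hU' hV'
  ⟨N + 1, N.succ_pos, hN _ N.le_succ⟩

end ChainRecurrence

section FiniteShadowing

def FiniteShadowing (f : X → X) : Prop :=
  ∀ ε : ℝ, 0 < ε → ∃ δ : ℝ, 0 < δ ∧ ∀ (n : ℕ) (s : ℕ → X), IsDeltaChain f δ n s →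
    ∃ y : X, ∀ t ≤ n, dist (f^[t] y) (s t) < ε

variable {f : X → X}

lemma FiniteShadowing.exists_mem_image_inter (h : FiniteShadowing f) {U V : Set X}
    (hU : IsOpen U) (hV : IsOpen V) {p q : X} (hp : p ∈ U) (hq : q ∈ V) :
    ∃ δ : ℝ, 0 < δ ∧ ∀ n, ChainJoins f δ n p q → (f^[n] '' U ∩ V).Nonempty := by
  obtain ⟨r, hr, hrU⟩ := Metric.isOpen_iff.1 hU p hp
  obtain ⟨r', hr', hrV⟩ := Metric.isOpen_iff.1 hV q hq
  obtain ⟨δ, hδ, hsh⟩ := h _ (lt_min hr hr')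
  refine ⟨δ, hδ, fun n ⟨s, hs, hs0, hsn⟩ => ?_⟩
  obtain ⟨y, hy⟩ := hsh n s hs
  have hy0 : dist y p < min r r' := hs0 ▸ hy 0 n.zero_le
  have hyn : dist (f^[n] y) q < min r r' := hsn ▸ hy n le_rfl
  exact ⟨f^[n] y, ⟨y, hrU (hy0.trans_le (min_le_left _ _)), rfl⟩,
    hrV (hyn.trans_le (min_le_right _ _))⟩

lemma FiniteShadowing.topologicallyTransitive (h : FiniteShadowing f) (hc : ChainTransitive f) :
    TopologicallyTransitive f := by
  rintro U V hU hV ⟨p, hp⟩ ⟨q, hq⟩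
  obtain ⟨δ, hδ, H⟩ := h.exists_mem_image_inter hU hV hp hq
  obtain ⟨n, hn, hpq⟩ := hc δ hδ p q
  exact ⟨n, hn, H n hpq⟩

lemma FiniteShadowing.topologicallyMixing (h : FiniteShadowing f) (hc : ChainMixing f) :
    TopologicallyMixing f := by
  rintro U V hU hV ⟨p, hp⟩ ⟨q, hq⟩
  obtain ⟨δ, hδ, H⟩ := h.exists_mem_image_inter hU hV hp hq
  obtain ⟨N, hN⟩ := hc δ hδ p q
  exact ⟨N, fun n hn => H n (hN n hn)⟩

/-- Equals `w i` for `i ≥ 0` and `f^i (w 0)` for `i < 0`. -/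
def extendBackward {α : Type*} (f : α ≃ α) (w : ℕ → α) (i : ℤ) : α :=
  (f ^ (i - i.toNat)) (w i.toNat)

lemma extendBackward_natCast {α : Type*} (f : α ≃ α) (w : ℕ → α) (t : ℕ) :
    extendBackward f w t = w t := by
  simp [extendBackward]

lemma dist_extendBackward (f : X ≃ X) (w : ℕ → X) (i : ℤ) :
    dist (f (extendBackward f w i)) (extendBackward f w (i + 1)) =
      if 0 ≤ i then dist (f (w i.toNat)) (w (i.toNat + 1)) else 0 := by
  split_ifs with hi
  · lift i to ℕ using hi
    have h := extendBackward_natCast f w (i + 1)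
    push_cast at h
    simp [extendBackward_natCast, h]
  · have h : (i + 1).toNat = i.toNat := by omega
    rw [extendBackward, extendBackward, h, show i + 1 - (i.toNat : ℤ) = i - i.toNat + 1 by ring,
      Equiv.Perm.zpow_add_one_apply, dist_self]

lemma isTwoSidedLimitPseudoOrbit_extendBackward {f : X ≃ X} {w : ℕ → X}
    (hw : Tendsto (fun t => dist (f (w t)) (w (t + 1))) atTop (𝓝 0)) :
    IsTwoSidedLimitPseudoOrbit f (extendBackward f w) := by
  rw [IsTwoSidedLimitPseudoOrbit, Int.cofinite_eq, tendsto_sup]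
  simp only [dist_extendBackward]
  constructor
  · refine tendsto_const_nhds.congr' ?_
    filter_upwards [eventually_lt_atBot 0] with i hi
    simp [hi.not_ge]
  · have htoNat : Tendsto Int.toNat atTop atTop :=
      tendsto_atTop_atTop.2 fun b => ⟨b, fun i hi => by omega⟩
    refine (hw.comp htoNat).congr' ?_
    filter_upwards [eventually_ge_atTop 0] with i hi
    simp [hi]

lemma ShadowingPropertyZ.finiteShadowing {f : X ≃ X} (h : ShadowingPropertyZ f) :
    FiniteShadowing f := by
  intro ε hε
  obtain ⟨δ, hδ, hsh⟩ := h ε hε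
  refine ⟨δ, hδ, fun n s hs => ?_⟩
  set w := chainAppend n s (fun t => f^[t] (s n))
  have hw : ∀ t, dist (f (w t)) (w (t + 1)) < δ := fun t =>
    hs.append (isDeltaChain_iterate hδ (t + 1) (s n)) rfl t (by omega)
  obtain ⟨y, hy⟩ := hsh (extendBackward f w) fun i => by
    rw [dist_extendBackward]
    split_ifs
    exacts [hw _, hδ]
  refine ⟨y, fun t ht => ?_⟩
  simpa [Equiv.Perm.coe_pow, extendBackward_natCast, w, chainAppend_of_le ht] using hy t

end FiniteShadowing

def IsExpansivityConstant (f : X ≃ X) (c : ℝ) : Prop :=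
  ∀ x y : X, (∀ n : ℤ, dist ((f ^ n) x) ((f ^ n) y) ≤ c) → x = y

section Compact

variable [CompactSpace X]

lemma FiniteShadowing.shadowingPropertyZ {f : X ≃ₜ X} (h : FiniteShadowing f) :
    ShadowingPropertyZ f.toEquiv := by
  intro ε hε
  obtain ⟨δ, hδ, hsh⟩ := h (ε / 2) (half_pos hε)
  refine ⟨δ, hδ, fun x hx => ?_⟩
  have hwindow : ∀ k : ℕ, ∃ q : X, ∀ i : ℤ, i.natAbs ≤ k →
      dist ((f.toEquiv ^ i) q) (x i) < ε / 2 := by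
    intro k
    obtain ⟨y, hy⟩ := hsh (2 * k) (fun t => x (t - k)) fun t _ => by
      simpa [sub_add_eq_add_sub] using hx (t - k)
    refine ⟨(f.toEquiv ^ (k : ℤ)) y, fun i hi => ?_⟩
    obtain ⟨t, ht⟩ : ∃ t : ℕ, (t : ℤ) = i + k := ⟨(i + k).toNat, by omega⟩
    have := hy t (by omega)
    rw [show (t : ℤ) - k = i by omega] at this
    rwa [← Equiv.Perm.zpow_add_apply, ← ht, Equiv.Perm.zpow_natCast_apply]
  choose q hq using hwindow
  obtain ⟨y, -, hy⟩ := isCompact_univ.exists_mapClusterPt (f := atTop) (u := q) (by simp)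
  refine ⟨y, fun i => lt_of_le_of_lt ?_ (half_lt_self hε)⟩
  have hcl : IsClosed {z | dist ((f.toEquiv ^ i) z) (x i) ≤ ε / 2} :=
    isClosed_le ((f.continuous_toEquiv_zpow i).dist continuous_const) continuous_const
  refine hcl.mem_of_mapClusterPt hy ?_
  filter_upwards [eventually_ge_atTop i.natAbs] with k hk using (hq k i hk).le

lemma IsExpansivityConstant.exists_uniform {f : X ≃ₜ X} {c : ℝ}
    (hexp : IsExpansivityConstant f.toEquiv c) {ρ : ℝ} (hρ : 0 < ρ) :
    ∃ N : ℕ, ∀ u w : X, (∀ j : ℤ, j.natAbs ≤ N →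
      dist ((f.toEquiv ^ j) u) ((f.toEquiv ^ j) w) ≤ c) → dist u w < ρ := by
  by_contra! hfar
  choose u w hclose hρuw using hfar
  obtain ⟨⟨a, b⟩, -, hab⟩ := isCompact_univ.exists_mapClusterPt (f := atTop)
    (u := fun N => (u N, w N)) (by simp)
  have hab_eq : a = b := hexp a b fun j => by
    have hcl : IsClosed {z : X × X | dist ((f.toEquiv ^ j) z.1) ((f.toEquiv ^ j) z.2) ≤ c} :=
      isClosed_le (((f.continuous_toEquiv_zpow j).comp continuous_fst).dist
        ((f.continuous_toEquiv_zpow j).comp continuous_snd)) continuous_const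
    refine hcl.mem_of_mapClusterPt hab ?_
    filter_upwards [eventually_ge_atTop j.natAbs] with N hN using hclose N j hN
  have hcl : IsClosed {z : X × X | ρ ≤ dist z.1 z.2} := isClosed_le continuous_const continuous_dist
  have hρab : ρ ≤ dist a b := hcl.mem_of_mapClusterPt hab (Eventually.of_forall hρuw)
  rw [hab_eq, dist_self] at hρab
  exact hρ.not_ge hρab

end Compact

section TwoSidedLimitShadowing

variable {δ : ℝ}

lemma Homeomorph.mapClusterPt_zpow_apply (f : X ≃ₜ X) {l : Filter ℤ} {a x : X}
    (h : MapClusterPt a l fun n : ℤ => (f.toEquiv ^ n) x) (i : ℤ) (hl : Tendsto (i + ·) l l) :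
    MapClusterPt ((f.toEquiv ^ i) a) l fun n : ℤ => (f.toEquiv ^ n) x := by
  refine MapClusterPt.of_comp hl ?_
  simpa [Function.comp_def, Equiv.Perm.zpow_add_apply] using
    h.continuousAt_comp (f.continuous_toEquiv_zpow i).continuousAt

lemma chainJoins_of_mapClusterPt_atTop {f : X ≃ X} {a x : X}
    (h : MapClusterPt a atTop fun n : ℤ => (f ^ n) x) (hδ : 0 < δ) :
    ∃ n, 0 < n ∧ ChainJoins f δ n x a := by
  obtain ⟨n, hn, hxa⟩ := ((h.frequently (Metric.ball_mem_nhds a (half_pos hδ))).and_eventually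
    (eventually_gt_atTop 0)).exists.imp fun _ h => h.symm
  lift n to ℕ using hn.le
  refine ⟨n, by exact_mod_cast hn, chainJoins_of_near_orbit (u := x) (by exact_mod_cast hn)
    (by simpa using hδ) ?_⟩
  rwa [← Equiv.Perm.zpow_natCast_apply]

lemma chainJoins_of_mapClusterPt_atBot {f : X ≃ₜ X} {b v : X}
    (h : MapClusterPt b atBot fun n : ℤ => (f.toEquiv ^ n) v) (hδ : 0 < δ) :
    ∃ n, 0 < n ∧ ChainJoins f δ n b v := by
  obtain ⟨κ, hκ, hfκ⟩ := Metric.continuous_iff.1 f.continuous b (δ / 2) (half_pos hδ)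
  obtain ⟨n, hn, hvb⟩ := ((h.frequently (Metric.ball_mem_nhds b hκ)).and_eventually
    (eventually_lt_atBot 0)).exists.imp fun _ h => h.symm
  obtain ⟨m, rfl⟩ : ∃ m : ℕ, n = -m := ⟨n.natAbs, by omega⟩
  refine ⟨m, by omega, chainJoins_of_near_orbit (u := (f.toEquiv ^ (-m : ℤ)) v) (by omega)
    (by rw [dist_comm]; exact hfκ _ hvb) ?_⟩
  show dist ((⇑f.toEquiv)^[m] _) v < δ / 2
  rw [← Equiv.Perm.zpow_natCast_apply, ← Equiv.Perm.zpow_add_apply]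
  simpa using half_pos hδ

/-- Shadowing, with a gap, the pseudo-orbit that follows the orbit of `a` up to time `0` and the
orbit of `b` afterwards yields a chain from the past of `a` to the future of `b`. -/
lemma TwoSidedLimitShadowingWithGap.exists_chainJoins {f : X ≃ X}
    (h : TwoSidedLimitShadowingWithGap f) (a b : X) (hδ : 0 < δ) :
    ∃ (j j' : ℤ) (n : ℕ), 0 < n ∧ ChainJoins f δ n ((f ^ j) a) ((f ^ j') b) := by
  set z : ℤ → X := fun i => (f ^ i) (if i ≤ 0 then a else b)
  have hz : IsTwoSidedLimitPseudoOrbit f z := by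
    refine tendsto_const_nhds.congr' ?_
    filter_upwards [eventually_cofinite_ne 0] with i hi
    have hab : (if i + 1 ≤ 0 then a else b) = if i ≤ 0 then a else b := by
      split_ifs <;> first | rfl | omega
    simp only [z, hab, Equiv.Perm.zpow_add_one_apply, dist_self]
  obtain ⟨_, hN⟩ := h
  obtain ⟨K, -, y, hbot, htop⟩ := hN z hz
  obtain ⟨J, hJ⟩ := eventually_atBot.1 (hbot.eventually (gt_mem_nhds (half_pos hδ)))
  obtain ⟨J', hJ'⟩ := eventually_atTop.1 (htop.eventually (gt_mem_nhds (half_pos hδ)))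
  set j := min (J - 1) (-1)
  set j' := max (max J' 1) (j - K + 1)
  obtain ⟨n, hn⟩ : ∃ n : ℕ, (n : ℤ) = K + j' - j := ⟨(K + j' - j).toNat, by omega⟩
  refine ⟨j, j', n, by omega, chainJoins_of_near_orbit (u := (f ^ j) y) (by omega) ?_ ?_⟩
  · have := hJ (j + 1) (by omega)
    simp only [z, if_pos (show j + 1 ≤ 0 by omega), Equiv.Perm.zpow_add_one_apply] at this
    rwa [dist_comm]
  · have := hJ' j' (by omega)
    simp only [z, if_neg (show ¬ j' ≤ 0 by omega)] at this
    rwa [← Equiv.Perm.zpow_natCast_apply, ← Equiv.Perm.zpow_add_apply, hn,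
      show K + j' - j + j = K + j' by ring]

lemma TwoSidedLimitShadowingWithGap.chainTransitive [CompactSpace X] {f : X ≃ₜ X}
    (h : TwoSidedLimitShadowingWithGap f.toEquiv) : ChainTransitive f := by
  intro δ hδ x v
  obtain ⟨a, -, ha⟩ := isCompact_univ.exists_mapClusterPt (f := atTop)
    (u := fun n : ℤ => (f.toEquiv ^ n) x) (by simp)
  obtain ⟨b, -, hb⟩ := isCompact_univ.exists_mapClusterPt (f := atBot)
    (u := fun n : ℤ => (f.toEquiv ^ n) v) (by simp)
  obtain ⟨j, j', n, hn, hab⟩ := h.exists_chainJoins a b hδ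
  obtain ⟨n₁, -, h₁⟩ := chainJoins_of_mapClusterPt_atTop
    (f.mapClusterPt_zpow_apply ha j (tendsto_atTop_add_const_left _ _ tendsto_id)) hδ
  obtain ⟨n₂, -, h₂⟩ := chainJoins_of_mapClusterPt_atBot
    (f.mapClusterPt_zpow_apply hb j' (tendsto_atBot_add_const_left _ _ tendsto_id)) hδ
  exact ⟨n₁ + n + n₂, by omega, (h₁.trans hab).trans h₂⟩

end TwoSidedLimitShadowing

section Concatenation

variable {f : X → X}

lemma exists_concat_isDeltaChain {δ : ℕ → ℝ} (hδ : Antitone δ) {c : ℕ → ℕ → X} {L : ℕ → ℕ}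
    (hL : ∀ k, 0 < L k) (hc : ∀ k, IsDeltaChain f (δ k) (L k) (c k))
    (hcc : ∀ k, c k (L k) = c (k + 1) 0) :
    ∃ (w : ℕ → X) (a : ℕ → ℕ), StrictMono a ∧ (∀ k, ∀ t ≤ L k, w (a k + t) = c k t) ∧
      ∀ k, ∀ m ≥ a k, dist (f (w m)) (w (m + 1)) < δ k := by
  set a : ℕ → ℕ := fun k => ∑ j ∈ Finset.range k, L j
  have ha : ∀ k, a (k + 1) = a k + L k := fun k => Finset.sum_range_succ L k
  have hmono : StrictMono a := strictMono_nat_of_lt_succ fun k => by rw [ha]; linarith [hL k]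
  have hblock : ∀ m, ∃ k, ∃ t < L k, a k + t = m := by
    intro m
    induction m with
    | zero => exact ⟨0, 0, hL 0, rfl⟩
    | succ m ih =>
      obtain ⟨k, t, ht, rfl⟩ := ih
      rcases (Nat.succ_le_of_lt ht).lt_or_eq with ht' | ht'
      · exact ⟨k, t + 1, ht', rfl⟩
      · exact ⟨k + 1, 0, hL _, by rw [ha]; omega⟩
  have hindex : ∀ {k k' t}, t < L k → a k' ≤ a k + t → k' ≤ k := fun {k k' t} ht h => by
    by_contra! hk
    have := hmono.monotone (Nat.succ_le_of_lt hk)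
    rw [ha] at this
    omega
  choose K T hT hKT using hblock
  have hKT_eq : ∀ {k t}, t < L k → K (a k + t) = k ∧ T (a k + t) = t := fun {k t} ht => by
    have hm := hKT (a k + t)
    have hk : K (a k + t) = k := le_antisymm (hindex ht (by omega)) (hindex (hT _) (by omega))
    rw [hk] at hm
    exact ⟨hk, by omega⟩
  have hw : ∀ k, ∀ t ≤ L k, c (K (a k + t)) (T (a k + t)) = c k t := by
    intro k t ht
    rcases ht.lt_or_eq with ht | rfl
    · rw [(hKT_eq ht).1, (hKT_eq ht).2]
    · have h₀ := hKT_eq (k := k + 1) (hL _)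
      rw [add_zero, ha] at h₀
      rw [h₀.1, h₀.2, hcc]
  refine ⟨fun m => c (K m) (T m), a, hmono, hw, fun k m hm => ?_⟩
  obtain ⟨k', t, ht, rfl⟩ : ∃ k', ∃ t < L k', a k' + t = m := ⟨K m, T m, hT m, hKT m⟩
  simp only [hw k' t ht.le, add_assoc, hw k' (t + 1) ht]
  exact (hc k' t ht).trans_le (hδ (hindex ht hm))

end Concatenation

/-- If finite shadowing failed, gluing ever finer non-shadowable chains by chains into one
pseudo-orbit would produce a two-sided limit pseudo-orbit whose future is not shadowed. -/
lemma TwoSidedLimitShadowingWithGap.finiteShadowing {f : X ≃ X}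
    (h : TwoSidedLimitShadowingWithGap f) (hc : ChainTransitive f) : FiniteShadowing f := by
  by_contra hfs
  obtain ⟨ε, hε, hbad⟩ : ∃ ε, 0 < ε ∧ ∀ δ, 0 < δ → ∃ n s, IsDeltaChain f δ n s ∧
      ∀ y, ∃ t ≤ n, ε ≤ dist (f^[t] y) (s t) := by
    simpa [FiniteShadowing] using hfs
  set δ : ℕ → ℝ := fun k => 1 / (k + 1)
  have hδ : ∀ k, 0 < δ k := fun k => by positivity
  choose n s hs hsbad using fun k => hbad (δ k) (hδ k)
  choose m hm b hb hb0 hbm using fun k => hc (δ k) (hδ k) (s k (n k)) (s (k + 1) 0)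
  obtain ⟨w, a, ha, hwa, hwδ⟩ := exists_concat_isDeltaChain (f := f) (δ := δ)
    (c := fun k => chainAppend (n k) (s k) (b k)) (L := fun k => n k + m k)
    (fun i j hij => by dsimp [δ]; gcongr) (fun k => by have := hm k; omega)
    (fun k => (hs k).append (hb k) (hb0 k).symm)
    (fun k => by simp [chainAppend_add (hb0 k).symm, hbm, chainAppend_of_le])
  have hw : Tendsto (fun t => dist (f (w t)) (w (t + 1))) atTop (𝓝 0) := by
    refine tendsto_order.2 ⟨fun η hη => Eventually.of_forall fun t => hη.trans_le dist_nonneg,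
      fun η hη => ?_⟩
    obtain ⟨k, hk⟩ := exists_nat_one_div_lt hη
    filter_upwards [eventually_ge_atTop (a k)] with t ht using (hwδ k t ht).trans hk
  obtain ⟨_, hN⟩ := h
  obtain ⟨K, -, y, -, hy⟩ := hN _ (isTwoSidedLimitPseudoOrbit_extendBackward hw)
  obtain ⟨I, hI⟩ := eventually_atTop.1 (hy.eventually (gt_mem_nhds hε))
  set k := I.toNat
  obtain ⟨t, ht, hbadt⟩ := hsbad k ((f ^ (K + a k)) y)
  have hIk : I ≤ a k := by have := ha.id_le k; simp only [id] at this; omega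
  have hclose := hI (a k + t : ℕ) (by omega)
  rw [extendBackward_natCast, hwa k t (by omega), chainAppend_of_le ht] at hclose
  rw [← Equiv.Perm.zpow_natCast_apply, ← Equiv.Perm.zpow_add_apply] at hbadt
  push_cast at hclose
  rw [show (t : ℤ) + (K + a k) = K + (a k + t) by ring] at hbadt
  linarith

lemma TopologicallyMixing.exists_forall_chainJoins [CompactSpace X] {f : X → X}
    (hf : Continuous f) (h : TopologicallyMixing f) {δ : ℝ} (hδ : 0 < δ) :
    ∃ M, ∀ n ≥ M, ∀ p q, ChainJoins f δ n p q := by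
  obtain ⟨κ, hκ, hfκ⟩ := Metric.uniformContinuous_iff.1
    (CompactSpace.uniformContinuous_of_continuous hf) (δ / 2) (half_pos hδ)
  set r := min (κ / 2) (δ / 4)
  have hr : 0 < r := lt_min (half_pos hκ) (by positivity)
  obtain ⟨T, -, hT, hcover⟩ := finite_cover_balls_of_compact (isCompact_univ (X := X)) hr
  choose N hN using fun e e' : X => h _ _ Metric.isOpen_ball Metric.isOpen_ball
    ⟨e, Metric.mem_ball_self hr⟩ ⟨e', Metric.mem_ball_self hr⟩
  obtain ⟨M, hM⟩ := ((hT.prod hT).image fun e : X × X => N e.1 e.2).bddAbove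
  refine ⟨M + 1, fun n hn p q => ?_⟩
  obtain ⟨e, he, hpe⟩ := Set.mem_iUnion₂.1 (hcover (Set.mem_univ p))
  obtain ⟨e', he', hqe⟩ := Set.mem_iUnion₂.1 (hcover (Set.mem_univ q))
  have hNn : N e e' ≤ n := (hM ⟨(e, e'), ⟨he, he'⟩, rfl⟩).trans (by omega)
  obtain ⟨_, ⟨u, hu, rfl⟩, hue'⟩ := hN e e' n hNn
  rw [Metric.mem_ball] at hpe hqe hu hue'
  refine chainJoins_of_near_orbit (u := u) (by omega) (hfκ ?_) ?_
  · linarith [dist_triangle_right p u e, min_le_left (κ / 2) (δ / 4)]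
  · linarith [dist_triangle_right (f^[n] u) q e', min_le_right (κ / 2) (δ / 4)]

lemma IsTwoSidedLimitPseudoOrbit.congr {f : X ≃ X} {x z : ℤ → X}
    (hx : IsTwoSidedLimitPseudoOrbit f x) (h : z =ᶠ[cofinite] x) :
    IsTwoSidedLimitPseudoOrbit f z := by
  refine hx.congr' ?_
  filter_upwards [h, (add_left_injective 1).tendsto_cofinite.eventually h] with i h₀ h₁
  rw [h₀, h₁]

/-- Replace a long symmetric window of `x` by a `δ`-chain of the same length between its ends. -/
lemma IsTwoSidedLimitPseudoOrbit.exists_pseudoOrbit_eventuallyEq {f : X ≃ X} {x : ℤ → X}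
    (hx : IsTwoSidedLimitPseudoOrbit f x) {δ : ℝ} (hδ : 0 < δ) {M : ℕ}
    (hM : ∀ n ≥ M, ∀ p q, ChainJoins f δ n p q) :
    ∃ z : ℤ → X, (∀ i, dist (f (z i)) (z (i + 1)) < δ) ∧ z =ᶠ[cofinite] x := by
  have hsmall := hx.eventually (gt_mem_nhds hδ)
  rw [Int.cofinite_eq, eventually_sup, eventually_atBot, eventually_atTop] at hsmall
  obtain ⟨⟨A, hA⟩, B, hB⟩ := hsmall
  set m : ℕ := M + A.natAbs + B.natAbs
  obtain ⟨s, hs, hs0, hsm⟩ := hM (2 * m) (by omega) (x (-m)) (x m)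
  set z : ℤ → X := fun i => if -(m : ℤ) ≤ i ∧ i ≤ m then s (i + m).toNat else x i
  have hzx : ∀ i : ℤ, (i ≤ -(m : ℤ) ∨ (m : ℤ) ≤ i) → z i = x i := by
    rintro i hi
    simp only [z]
    split_ifs with h
    · obtain rfl | rfl : i = -(m : ℤ) ∨ i = m := by omega
      · simpa using hs0
      · rw [show ((m : ℤ) + m).toNat = 2 * m by omega, hsm]
    · rfl
  refine ⟨z, fun i => ?_, ?_⟩
  · by_cases hi : -(m : ℤ) ≤ i ∧ i < m
    · have h₀ : z i = s (i + m).toNat := if_pos ⟨hi.1, hi.2.le⟩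
      have h₁ : z (i + 1) = s ((i + m).toNat + 1) := by
        simp only [z, if_pos (show -(m : ℤ) ≤ i + 1 ∧ i + 1 ≤ m by omega)]
        congr 1
        omega
      rw [h₀, h₁]
      exact hs _ (by omega)
    · rw [hzx i (by omega), hzx (i + 1) (by omega)]
      rcases not_and_or.1 hi with hi | hi
      · exact hA i (by omega)
      · exact hB i (by omega)
  · refine (Set.finite_Icc (-(m : ℤ)) m).subset fun i hi => ?_
    by_contra hi'
    exact hi (hzx i (by simp only [Set.mem_Icc] at hi'; omega))

/-- Far out, `z` is an arbitrarily fine pseudo-orbit on long windows, so some orbit shadows it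
there arbitrarily well; that orbit and the orbit of `y` are then `c`-close on the window, and
uniform expansivity forces them together at its centre. -/
lemma IsTwoSidedLimitPseudoOrbit.tendsto_dist_of_shadowed [CompactSpace X] {f : X ≃ₜ X} {c : ℝ}
    (hexp : IsExpansivityConstant f.toEquiv c) (hsh : ShadowingPropertyZ f.toEquiv)
    {z : ℤ → X} (hz : IsTwoSidedLimitPseudoOrbit f.toEquiv z) {y : X}
    (hy : ∀ i, dist ((f.toEquiv ^ i) y) (z i) < c / 2) :
    Tendsto (fun i => dist ((f.toEquiv ^ i) y) (z i)) cofinite (𝓝 0) := by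
  have hc : 0 < c := by linarith [hy 0, dist_nonneg (x := (f.toEquiv ^ (0 : ℤ)) y) (y := z 0)]
  refine tendsto_order.2 ⟨fun η hη => Eventually.of_forall fun i => hη.trans_le dist_nonneg,
    fun ρ hρ => ?_⟩
  set ε := min (ρ / 2) (c / 2)
  obtain ⟨δ, hδ, hfs⟩ := hsh.finiteShadowing ε (lt_min (half_pos hρ) (half_pos hc))
  obtain ⟨N, hN⟩ := hexp.exists_uniform (half_pos hρ)
  have hwindow : ∀ᶠ i in cofinite, ∀ j ∈ Finset.Icc (-(N : ℤ)) N,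
      dist (f (z (i + j))) (z (i + j + 1)) < δ :=
    (eventually_all_finset _).2 fun j _ =>
      (add_left_injective j).tendsto_cofinite.eventually (hz.eventually (gt_mem_nhds hδ))
  filter_upwards [hwindow] with i hi
  obtain ⟨u, hu⟩ := hfs (2 * N) (fun t => z (i - N + t)) fun t ht => by
    have := hi (t - N) (Finset.mem_Icc.2 ⟨by omega, by omega⟩)
    rw [show i + (t - N) = i - N + t by ring] at this
    simpa [add_assoc] using this
  have hnear : dist ((f.toEquiv ^ (N : ℤ)) u) ((f.toEquiv ^ i) y) < ρ / 2 := hN _ _ fun j hj => by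
    obtain ⟨t, ht⟩ : ∃ t : ℕ, (t : ℤ) = j + N := ⟨(j + N).toNat, by omega⟩
    have h₁ := hu t (by omega)
    rw [show i - N + (t : ℤ) = i + j by omega] at h₁
    rw [← Equiv.Perm.zpow_add_apply, ← Equiv.Perm.zpow_add_apply, ← ht,
      Equiv.Perm.zpow_natCast_apply, add_comm j i]
    calc dist (f^[t] u) ((f.toEquiv ^ (i + j)) y)
        ≤ dist (f^[t] u) (z (i + j)) + dist ((f.toEquiv ^ (i + j)) y) (z (i + j)) :=
          dist_triangle_right _ _ _
      _ ≤ ε + c / 2 := add_le_add h₁.le (hy _).le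
      _ ≤ c := by linarith [min_le_right (ρ / 2) (c / 2)]
  have h₀ := hu N (by omega)
  rw [show i - N + (N : ℤ) = i by ring, ← Equiv.Perm.zpow_natCast_apply] at h₀
  calc dist ((f.toEquiv ^ i) y) (z i)
      ≤ dist ((f.toEquiv ^ (N : ℤ)) u) ((f.toEquiv ^ i) y) +
          dist ((f.toEquiv ^ (N : ℤ)) u) (z i) := dist_triangle_left _ _ _
    _ < ρ / 2 + ρ / 2 := add_lt_add hnear (h₀.trans_le (min_le_left _ _))
    _ = ρ := add_halves ρ

lemma TopologicallyMixing.twoSidedLimitShadowing [CompactSpace X] {f : X ≃ₜ X} {c : ℝ}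
    (hc : 0 < c) (hexp : IsExpansivityConstant f.toEquiv c) (hmix : TopologicallyMixing f)
    (hsh : ShadowingPropertyZ f.toEquiv) : TwoSidedLimitShadowing f.toEquiv := by
  intro x hx
  obtain ⟨δ, hδ, hshδ⟩ := hsh (c / 2) (half_pos hc)
  obtain ⟨M, hM⟩ := hmix.exists_forall_chainJoins f.continuous hδ
  obtain ⟨z, hz, hzx⟩ := hx.exists_pseudoOrbit_eventuallyEq hδ hM
  obtain ⟨y, hy⟩ := hshδ z hz
  have hyx : Tendsto (fun i => dist ((f.toEquiv ^ i) y) (x i)) cofinite (𝓝 0) :=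
    ((hx.congr hzx).tendsto_dist_of_shadowed hexp hsh hy).congr' (hzx.mono fun i hi => by rw [hi])
  exact ⟨y, hyx.mono_left atBot_le_cofinite, by simpa using hyx.mono_left atTop_le_cofinite⟩

/-- For an expansive homeomorphism of a compact connected metric space the following
are equivalent: (1) transitivity and shadowing; (2) mixing and shadowing; (3) two-sided
limit shadowing with a gap; (4) two-sided limit shadowing. -/
theorem stmt15 [CompactSpace X] [ConnectedSpace X] (f : X ≃ₜ X)
    (he : Expansive f.toEquiv) :
    ((TopologicallyTransitive ⇑f ∧ ShadowingPropertyZ f.toEquiv) ↔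
      (TopologicallyMixing ⇑f ∧ ShadowingPropertyZ f.toEquiv)) ∧
    ((TopologicallyMixing ⇑f ∧ ShadowingPropertyZ f.toEquiv) ↔
      TwoSidedLimitShadowingWithGap f.toEquiv) ∧
    (TwoSidedLimitShadowingWithGap f.toEquiv ↔
      TwoSidedLimitShadowing f.toEquiv) := by
  obtain ⟨c, hc, hexp⟩ := he
  have h12 : TopologicallyTransitive f ∧ ShadowingPropertyZ f.toEquiv →
      TopologicallyMixing f ∧ ShadowingPropertyZ f.toEquiv := fun ⟨htr, hsh⟩ =>
    ⟨hsh.finiteShadowing.topologicallyMixing (htr.chainTransitive f.continuous).chainMixing, hsh⟩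
  have h24 : TopologicallyMixing f ∧ ShadowingPropertyZ f.toEquiv →
      TwoSidedLimitShadowing f.toEquiv := fun ⟨hmix, hsh⟩ =>
    hmix.twoSidedLimitShadowing hc hexp hsh
  have h43 : TwoSidedLimitShadowing f.toEquiv → TwoSidedLimitShadowingWithGap f.toEquiv :=
    fun h => ⟨0, fun x hx => ⟨0, le_rfl, h x hx⟩⟩
  have h31 : TwoSidedLimitShadowingWithGap f.toEquiv →
      TopologicallyTransitive f ∧ ShadowingPropertyZ f.toEquiv := fun h =>
    have hfs := h.finiteShadowing h.chainTransitive
    ⟨hfs.topologicallyTransitive h.chainTransitive, hfs.shadowingPropertyZ⟩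
  exact ⟨⟨h12, fun h => ⟨h.1.topologicallyTransitive, h.2⟩⟩, ⟨fun h => h43 (h24 h),
    fun h => h12 (h31 h)⟩, ⟨fun h => h24 (h12 (h31 h)), h43⟩⟩
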